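/- arXiv:1905.12148 — 5 statements merged into one kernel-verified Lean document; each statement's English description precedes it below -/
import Mathlib

section
/- Let m ≥ 1 and let ε be a Q-digit sequence with ε_m ≥ 1 and ε_n = 0 for all n > m. Define the Q-digit sequence δ by δ_n = ε_n for n < m, δ_m = ε_m − 1, and δ_n = q_n − 1 for n > m. Then Φ_Q(δ) = Φ_Q(ε) (the two sequences represent the same number), and f̂(δ) − f̂(ε) = −1/q^m + Σ_{n=m+1}^∞ (q_n − 1)/q^n ≤ 0; moreover this difference equals 0 if and only if q_n = q for all n > m. -/
open Filter Topology Finset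

/-!
Both expansions are series `∑ x n / W n` with weights `W n = ∏_{j ≤ n} b j`, `b j ≥ 2`:
`b = a` for `Φ_Q` and `b ≡ q` for `f̂`. Passing from `ε` to `δ` lowers the digit at `m` by one
and replaces every later digit `0` by `a n - 1`, so the value changes by
`-1 / W m + ∑_{n > m} (a n - 1) / W n`. For `b = a` the tail telescopes,
`(a n - 1) / W n = 1 / W (n - 1) - 1 / W n`, to exactly `1 / W m`. For `b ≡ q` it is termwise
at most the telescoping series `∑_{n > m} (q - 1) / q ^ (n + 1) = 1 / q ^ (m + 1)`, and strictly
smaller as soon as some `a n < q`.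
-/

lemma hasSum_sub_succ_of_antitone {F : ℕ → ℝ} (hF : Antitone F)
    (hlim : Tendsto F atTop (𝓝 0)) : HasSum (fun k => F k - F (k + 1)) (F 0) := by
  rw [hasSum_iff_tendsto_nat_of_nonneg (fun k => sub_nonneg.2 (hF k.le_succ))]
  simp only [sum_range_sub']
  simpa using tendsto_const_nhds.sub hlim

section ProductWeights

variable {b : ℕ → ℝ}

lemma two_pow_le_prod_range (hb : ∀ n, 2 ≤ b n) (n : ℕ) : (2 : ℝ) ^ n ≤ ∏ j ∈ range n, b j := by
  simpa using prod_le_prod (s := range n) (fun _ _ => zero_le_two) (fun j _ => hb j)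

lemma prod_range_pos (hb : ∀ n, 2 ≤ b n) (n : ℕ) : 0 < ∏ j ∈ range n, b j :=
  (pow_pos two_pos n).trans_le (two_pow_le_prod_range hb n)

lemma antitone_one_div_prod_range (hb : ∀ n, 2 ≤ b n) :
    Antitone fun n => 1 / ∏ j ∈ range n, b j := by
  refine antitone_nat_of_succ_le fun n => one_div_le_one_div_of_le (prod_range_pos hb n) ?_
  rw [prod_range_succ]
  exact le_mul_of_one_le_right (prod_range_pos hb n).le (one_le_two.trans (hb n))

lemma tendsto_one_div_prod_range (hb : ∀ n, 2 ≤ b n) :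
    Tendsto (fun n => 1 / ∏ j ∈ range n, b j) atTop (𝓝 0) := by
  refine squeeze_zero (fun n => (one_div_pos.2 (prod_range_pos hb n)).le) (fun n => ?_)
    (tendsto_pow_atTop_nhds_zero_of_lt_one (by norm_num : (0 : ℝ) ≤ 1 / 2) (by norm_num))
  rw [div_pow, one_pow]
  exact one_div_le_one_div_of_le (by positivity) (two_pow_le_prod_range hb n)

lemma summable_div_prod_range {c : ℕ → ℝ} {C : ℝ} (hb : ∀ n, 2 ≤ b n) (hc0 : ∀ n, 0 ≤ c n)
    (hcC : ∀ n, c n ≤ C) : Summable fun n => c n / ∏ j ∈ range (n + 1), b j := by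
  refine .of_nonneg_of_le (fun n => div_nonneg (hc0 n) (prod_range_pos hb _).le) (fun n => ?_)
    ((summable_geometric_two).mul_left C)
  have h2 : (2 : ℝ) ^ n ≤ ∏ j ∈ range (n + 1), b j :=
    (pow_le_pow_right₀ one_le_two n.le_succ).trans (two_pow_le_prod_range hb _)
  calc c n / ∏ j ∈ range (n + 1), b j ≤ C / 2 ^ n :=
        div_le_div₀ ((hc0 0).trans (hcC 0)) (hcC n) (by positivity) h2
    _ = C * (1 / 2) ^ n := by rw [div_pow, one_pow, mul_one_div]

lemma hasSum_pred_div_prod_range (hb : ∀ n, 2 ≤ b n) (m : ℕ) :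
    HasSum (fun i => (b (m + 1 + i) - 1) / ∏ j ∈ range (m + 2 + i), b j)
      (1 / ∏ j ∈ range (m + 1), b j) := by
  have hF := hasSum_sub_succ_of_antitone
    ((antitone_one_div_prod_range hb).comp_monotone fun _ _ h => Nat.add_le_add_left h (m + 1))
    ((tendsto_one_div_prod_range hb).comp ((tendsto_add_atTop_nat (m + 1)).congr fun i => add_comm i (m + 1)))
  refine hF.congr_fun fun i => ?_
  have hP := (prod_range_pos hb (m + 1 + i)).ne'
  have hb0 : b (m + 1 + i) ≠ 0 := by linarith [hb (m + 1 + i)]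
  simp only [Function.comp_apply, show m + 2 + i = m + 1 + i + 1 by omega,
    show m + 1 + (i + 1) = m + 1 + i + 1 by omega, prod_range_succ]
  field_simp

end ProductWeights

lemma tsum_sub_tsum_eq_of_borrow {W x y : ℕ → ℝ} {m : ℕ} (hx : Summable fun n => x n / W n)
    (hy : Summable fun n => y n / W n) (hlt : ∀ n < m, x n = y n) (hm : x m = y m - 1) :
    ∑' n, x n / W n - ∑' n, y n / W n
      = -(1 / W m) + ∑' i, (x (m + 1 + i) - y (m + 1 + i)) / W (m + 1 + i) := by
  have hd : Summable fun n => (x n - y n) / W n := by simpa only [sub_div] using hx.sub hy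
  rw [← hx.tsum_sub hy, tsum_congr fun n => (sub_div (x n) (y n) (W n)).symm,
    ← hd.sum_add_tsum_nat_add (m + 1), sum_range_succ,
    sum_eq_zero fun n hn => by rw [hlt n (mem_range.1 hn), sub_self, zero_div], hm]
  simp only [add_comm _ (m + 1)]
  ring

section PowerWeights

variable {q : ℝ} {c : ℕ → ℝ}

lemma hasSum_pred_div_pow (hq : 2 ≤ q) (m : ℕ) :
    HasSum (fun i => (q - 1) / q ^ (m + 2 + i)) (1 / q ^ (m + 1)) := by
  simpa using hasSum_pred_div_prod_range (b := fun _ => q) (fun _ => hq) m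

lemma summable_pred_div_pow (hq : 2 ≤ q) (hc1 : ∀ n, 1 ≤ c n) (hcq : ∀ n, c n ≤ q) (m : ℕ) :
    Summable fun i => (c (m + 1 + i) - 1) / q ^ (m + 2 + i) :=
  .of_nonneg_of_le (fun i => div_nonneg (sub_nonneg.2 (hc1 _)) (by positivity))
    (fun i => by gcongr; exact hcq _) (hasSum_pred_div_pow hq m).summable

lemma tsum_pred_div_pow_le (hq : 2 ≤ q) (hc1 : ∀ n, 1 ≤ c n) (hcq : ∀ n, c n ≤ q) (m : ℕ) :
    ∑' i, (c (m + 1 + i) - 1) / q ^ (m + 2 + i) ≤ 1 / q ^ (m + 1) :=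
  hasSum_le (fun i => by gcongr; exact hcq _) (summable_pred_div_pow hq hc1 hcq m).hasSum
    (hasSum_pred_div_pow hq m)

lemma tsum_pred_div_pow_eq_iff (hq : 2 ≤ q) (hc1 : ∀ n, 1 ≤ c n) (hcq : ∀ n, c n ≤ q) (m : ℕ) :
    ∑' i, (c (m + 1 + i) - 1) / q ^ (m + 2 + i) = 1 / q ^ (m + 1) ↔ ∀ n, m < n → c n = q := by
  constructor
  · intro h n hn
    by_contra hne
    obtain ⟨i, rfl⟩ : ∃ i, n = m + 1 + i := ⟨n - (m + 1), by omega⟩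
    refine (hasSum_lt (i := i) (fun i => by gcongr; exact hcq _) ?_
      (summable_pred_div_pow hq hc1 hcq m).hasSum (hasSum_pred_div_pow hq m)).ne h
    have : 0 < q := by linarith
    gcongr
    exact lt_of_le_of_ne (hcq _) hne
  · intro h
    rw [tsum_congr fun i => by rw [h (m + 1 + i) (by omega)]]
    exact (hasSum_pred_div_pow hq m).tsum_eq

end PowerWeights

/-- 0-indexed: index `n : ℕ` corresponds to the paper's index `n+1`.
Fix `q ≥ 2` and a sequence `a` of integers with `2 ≤ a n ≤ q`.  A Q-digit sequence `ε`
satisfies `ε n < a n`.  `Φ_Q(ε) = ∑ ε n / (a 0 ⋯ a n)` and `f̂(ε) = ∑ ε n / q^(n+1)`. -/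
theorem stmt0 (q : ℕ) (hq : 2 ≤ q) (a : ℕ → ℕ) (ha : ∀ n, 2 ≤ a n ∧ a n ≤ q)
    (ε : ℕ → ℕ) (hε : ∀ n, ε n < a n)
    (m : ℕ) (hεm : 1 ≤ ε m) (hεtail : ∀ n, m < n → ε n = 0)
    (δ : ℕ → ℕ)
    (hδlt : ∀ n, n < m → δ n = ε n) (hδm : δ m = ε m - 1)
    (hδgt : ∀ n, m < n → δ n = a n - 1) :
    (∑' n : ℕ, (δ n : ℝ) / ∏ j ∈ Finset.range (n + 1), (a j : ℝ))
      = (∑' n : ℕ, (ε n : ℝ) / ∏ j ∈ Finset.range (n + 1), (a j : ℝ)) ∧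
    (∑' n : ℕ, (δ n : ℝ) / (q : ℝ) ^ (n + 1)) - (∑' n : ℕ, (ε n : ℝ) / (q : ℝ) ^ (n + 1))
      = -(1 / (q : ℝ) ^ (m + 1)) + ∑' n : ℕ, ((a (m + 1 + n) : ℝ) - 1) / (q : ℝ) ^ (m + 2 + n) ∧
    (∑' n : ℕ, (δ n : ℝ) / (q : ℝ) ^ (n + 1)) - (∑' n : ℕ, (ε n : ℝ) / (q : ℝ) ^ (n + 1)) ≤ 0 ∧
    ((∑' n : ℕ, (δ n : ℝ) / (q : ℝ) ^ (n + 1)) - (∑' n : ℕ, (ε n : ℝ) / (q : ℝ) ^ (n + 1)) = 0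
      ↔ ∀ n, m < n → a n = q) := by
  have hq2 : (2 : ℝ) ≤ q := by exact_mod_cast hq
  have ha2 : ∀ n, (2 : ℝ) ≤ a n := fun n => by exact_mod_cast (ha n).1
  have haq : ∀ n, (a n : ℝ) ≤ q := fun n => by exact_mod_cast (ha n).2
  have hδa : ∀ n, δ n < a n := by
    intro n
    rcases lt_trichotomy n m with h | rfl | h
    · exact hδlt n h ▸ hε n
    · have := hε n; omega
    · have := (ha n).1; rw [hδgt n h]; omega
  have hdigit_le : ∀ x : ℕ → ℕ, (∀ n, x n < a n) → ∀ n, (x n : ℝ) ≤ q :=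
    fun x hx n => by exact_mod_cast ((hx n).trans_le (ha n).2).le
  have hborrow : ∀ b : ℕ → ℝ, (∀ n, 2 ≤ b n) →
      ∑' n, (δ n : ℝ) / ∏ j ∈ range (n + 1), b j - ∑' n, (ε n : ℝ) / ∏ j ∈ range (n + 1), b j
        = -(1 / ∏ j ∈ range (m + 1), b j)
          + ∑' i, ((a (m + 1 + i) : ℝ) - 1) / ∏ j ∈ range (m + 2 + i), b j := by
    intro b hb
    rw [tsum_sub_tsum_eq_of_borrow
      (summable_div_prod_range hb (fun _ => Nat.cast_nonneg _) (hdigit_le δ hδa))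
      (summable_div_prod_range hb (fun _ => Nat.cast_nonneg _) (hdigit_le ε hε))
      (fun n hn => by rw [hδlt n hn]) (by rw [hδm, Nat.cast_sub hεm, Nat.cast_one])]
    congr 2
    funext i
    rw [hδgt _ (by omega), hεtail _ (by omega), Nat.cast_sub (by linarith [(ha (m + 1 + i)).1]),
      show m + 1 + i + 1 = m + 2 + i by omega]
    push_cast
    ring
  have hdiff := hborrow (fun _ => q) (fun _ => hq2)
  simp only [prod_const, card_range] at hdiff
  refine ⟨sub_eq_zero.1 ?_, hdiff, ?_, ?_⟩
  · rw [hborrow _ ha2, (hasSum_pred_div_prod_range ha2 m).tsum_eq, neg_add_cancel]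
  · rw [hdiff]
    linarith [tsum_pred_div_pow_le hq2 (fun n => one_le_two.trans (ha2 n)) haq m]
  · rw [hdiff, neg_add_eq_zero, eq_comm,
      tsum_pred_div_pow_eq_iff hq2 (fun n => one_le_two.trans (ha2 n)) haq m]
    exact_mod_cast Iff.rfl
end

section
/- The function f is continuous at every point of [0,1] that is not Q-rational. -/
open Filter Topology MeasureTheory

/-- Product `q_1 ⋯ q_n` of the first `n` bases (0-indexed sequence `a`). -/
noncomputable def cantorProd (a : ℕ → ℕ) (n : ℕ) : ℕ := ∏ j ∈ Finset.range n, a j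

/-- The canonical Q-digit of `x` at (0-indexed) position `n`:
`ε_{n+1}(x) = ⌊q_1⋯q_{n+1} x⌋ - q_{n+1} ⌊q_1⋯q_n x⌋`. -/
noncomputable def cantorDigit (a : ℕ → ℕ) (x : ℝ) (n : ℕ) : ℤ :=
  ⌊(cantorProd a (n + 1) : ℝ) * x⌋ - (a n : ℤ) * ⌊(cantorProd a n : ℝ) * x⌋

/-- The function `f`: for `x < 1`, `f(x) = ∑ ε_n(x)/q^n`; `f(1) = ∑ (q_n - 1)/q^n`. -/
noncomputable def cantorF (a : ℕ → ℕ) (q : ℕ) (x : ℝ) : ℝ :=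
  if x < 1 then ∑' n : ℕ, (cantorDigit a x n : ℝ) / (q : ℝ) ^ (n + 1)
  else ∑' n : ℕ, ((a n : ℝ) - 1) / (q : ℝ) ^ (n + 1)

/-- `x ∈ (0,1)` is Q-rational if it is a finite sum `∑_{i=1}^m c_i/(q_1⋯q_i)`
with digits `0 ≤ c_i ≤ q_i - 1`. -/
def QRational (a : ℕ → ℕ) (x : ℝ) : Prop :=
  x ∈ Set.Ioo (0 : ℝ) 1 ∧
    ∃ m : ℕ, 1 ≤ m ∧ ∃ c : ℕ → ℕ, (∀ i, c i < a i) ∧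
      x = ∑ i ∈ Finset.range m, (c i : ℝ) / ∏ j ∈ Finset.range (i + 1), (a j : ℝ)

/-! Write `P_n = q_1 ⋯ q_n`. Each digit `ε_n` is a function of the two integers `⌊P_{n-1} x⌋` and
`⌊P_n x⌋`. If `x ∈ (0,1)` is not Q-rational, no `P_n x` is an integer, so these floors, and hence
all digits, are locally constant at `x`; at `x = 0` they are constant to the right, and at `x = 1`
the digits of `y` tend to `q_n - 1` as `y → 1⁻`, matching the value chosen for `f(1)`. Since the
digits are bounded by `q - 1`, dominated convergence for series turns convergence of every
digit into convergence of `f`. -/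

lemma Int.eventually_floor_mul_eq {c x : ℝ} (hx : ∀ k : ℤ, c * x ≠ k) :
    ∀ᶠ y in 𝓝 x, ⌊c * y⌋ = ⌊c * x⌋ := by
  have hmem : Set.Ico (⌊c * x⌋ : ℝ) (⌊c * x⌋ + 1) ∈ 𝓝 (c * x) :=
    Ico_mem_nhds ((Int.floor_le _).lt_of_ne (hx _).symm) (Int.lt_floor_add_one _)
  filter_upwards [(continuous_const_mul c).continuousAt hmem] with y hy
  exact Int.floor_eq_on_Ico _ _ hy

lemma Int.eventually_floor_mul_eq_right {c : ℝ} (hc : 0 ≤ c) (x : ℝ) :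
    ∀ᶠ y in 𝓝[≥] x, ⌊c * y⌋ = ⌊c * x⌋ :=
  tendsto_pure.1 <| (tendsto_floor_right_pure_floor (c * x)).comp <|
    (continuous_const_mul c).continuousWithinAt.tendsto_nhdsWithin
      fun _ hy => mul_le_mul_of_nonneg_left hy hc

lemma Int.eventually_floor_natCast_mul_eq_left {c : ℕ} (hc : 0 < c) :
    ∀ᶠ y in 𝓝[<] (1 : ℝ), ⌊(c : ℝ) * y⌋ = c - 1 := by
  have hmaps : Set.MapsTo (fun y : ℝ => (c : ℝ) * y) (Set.Iio 1) (Set.Iio ((c : ℤ) : ℝ)) :=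
    fun y hy => by simpa using mul_lt_mul_of_pos_left (Set.mem_Iio.1 hy) (by positivity)
  refine tendsto_pure.1 <| (tendsto_floor_left_pure_sub_one (c : ℤ)).comp ?_
  convert (continuous_const_mul (c : ℝ)).continuousWithinAt.tendsto_nhdsWithin hmaps using 2
  simp

section CantorDigits

variable {a : ℕ → ℕ}

lemma cantorProd_succ (a : ℕ → ℕ) (n : ℕ) : cantorProd a (n + 1) = cantorProd a n * a n :=
  Finset.prod_range_succ _ _

lemma cantorProd_pos (ha : ∀ n, 0 < a n) (n : ℕ) : 0 < cantorProd a n :=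
  Finset.prod_pos fun i _ => ha i

lemma cantorDigit_eq (x : ℝ) (n : ℕ) :
    cantorDigit a x n =
      ⌊(a n : ℝ) * ((cantorProd a n : ℝ) * x)⌋ - (a n : ℤ) * ⌊(cantorProd a n : ℝ) * x⌋ := by
  rw [cantorDigit, cantorProd_succ, Nat.cast_mul, mul_comm (cantorProd a n : ℝ), mul_assoc]

lemma cantorDigit_nonneg (x : ℝ) (n : ℕ) : 0 ≤ cantorDigit a x n := by
  rw [cantorDigit_eq, sub_nonneg, Int.le_floor]
  push_cast
  exact mul_le_mul_of_nonneg_left (Int.floor_le _) (Nat.cast_nonneg _)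

lemma cantorDigit_le (ha : ∀ n, 0 < a n) (x : ℝ) (n : ℕ) : cantorDigit a x n ≤ a n - 1 := by
  have hfloor : ⌊(a n : ℝ) * ((cantorProd a n : ℝ) * x)⌋ <
      (a n : ℤ) * ⌊(cantorProd a n : ℝ) * x⌋ + a n := by
    rw [Int.floor_lt]
    push_cast
    rw [← mul_add_one]
    exact mul_lt_mul_of_pos_left (Int.lt_floor_add_one _) (by exact_mod_cast ha n)
  rw [cantorDigit_eq]
  omega

lemma sum_cantorDigit_div_cantorProd (ha : ∀ n, 0 < a n) (x : ℝ) (m : ℕ) :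
    ∑ i ∈ Finset.range m, (cantorDigit a x i : ℝ) / cantorProd a (i + 1) =
      ⌊(cantorProd a m : ℝ) * x⌋ / cantorProd a m - ⌊x⌋ := by
  have hP (i : ℕ) : (cantorProd a i : ℝ) ≠ 0 := by exact_mod_cast (cantorProd_pos ha i).ne'
  have hstep (i : ℕ) : (cantorDigit a x i : ℝ) / cantorProd a (i + 1) =
      ⌊(cantorProd a (i + 1) : ℝ) * x⌋ / cantorProd a (i + 1) -
        ⌊(cantorProd a i : ℝ) * x⌋ / cantorProd a i := by
    have hPsucc : (cantorProd a (i + 1) : ℝ) = cantorProd a i * a i := by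
      rw [cantorProd_succ]; push_cast; rfl
    rw [cantorDigit, hPsucc]
    have : (a i : ℝ) ≠ 0 := by exact_mod_cast (ha i).ne'
    push_cast
    field_simp
  rw [Finset.sum_congr rfl fun i _ => hstep i, Finset.sum_range_sub
    (fun i => (⌊(cantorProd a i : ℝ) * x⌋ : ℝ) / cantorProd a i)]
  simp [cantorProd]

lemma qRational_of_cantorProd_mul_eq_intCast (ha : ∀ n, 0 < a n) {x : ℝ}
    (hx : x ∈ Set.Ioo 0 1) {m : ℕ} (hm : 1 ≤ m) {k : ℤ} (hk : (cantorProd a m : ℝ) * x = k) :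
    QRational a x := by
  have hfloor : ⌊x⌋ = 0 := Int.floor_eq_zero_iff.2 ⟨hx.1.le, hx.2⟩
  have hP : (cantorProd a m : ℝ) ≠ 0 := by exact_mod_cast (cantorProd_pos ha m).ne'
  have hsum := sum_cantorDigit_div_cantorProd ha x m
  rw [hk, Int.floor_intCast, hfloor, ← hk, mul_div_cancel_left₀ _ hP] at hsum
  refine ⟨hx, m, hm, fun i => (cantorDigit a x i).toNat, fun i => ?_, ?_⟩
  · have := cantorDigit_le ha x i
    have := ha i
    dsimp only
    omega
  · rw [Int.cast_zero, sub_zero] at hsum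
    refine hsum.symm.trans (Finset.sum_congr rfl fun i _ => ?_)
    rw [cantorProd]
    push_cast
    rw [← Int.cast_natCast, Int.toNat_of_nonneg (cantorDigit_nonneg x i)]

lemma cantorProd_mul_ne_intCast (ha : ∀ n, 0 < a n) {x : ℝ} (hx : x ∈ Set.Ioo 0 1)
    (hxirr : ¬ QRational a x) (n : ℕ) (k : ℤ) : (cantorProd a n : ℝ) * x ≠ k := fun hk =>
  hxirr <| qRational_of_cantorProd_mul_eq_intCast ha hx (Nat.le_add_left 1 n)
    (k := a n * k) (by rw [cantorProd_succ]; push_cast; rw [← hk]; ring)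

/-- At `y = 1` these are the digits of the expansion `1 = ∑ (q_n - 1)/(q_1⋯q_n)` used in the
definition of `f(1)`, not the canonical digits `ε_n(1) = 0`. -/
noncomputable def cantorFDigit (a : ℕ → ℕ) (y : ℝ) (n : ℕ) : ℝ :=
  if y < 1 then cantorDigit a y n else (a n : ℝ) - 1

lemma cantorF_eq_tsum (q : ℕ) (y : ℝ) :
    cantorF a q y = ∑' n, cantorFDigit a y n / (q : ℝ) ^ (n + 1) := by
  unfold cantorF cantorFDigit
  split_ifs <;> rfl

lemma cantorFDigit_nonneg (ha : ∀ n, 0 < a n) (y : ℝ) (n : ℕ) : 0 ≤ cantorFDigit a y n := by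
  unfold cantorFDigit
  split_ifs
  · exact_mod_cast cantorDigit_nonneg y n
  · exact sub_nonneg.2 (Nat.one_le_cast.2 (ha n))

lemma cantorFDigit_le (ha : ∀ n, 0 < a n) (y : ℝ) (n : ℕ) :
    cantorFDigit a y n ≤ (a n : ℝ) - 1 := by
  unfold cantorFDigit
  split_ifs
  · exact_mod_cast cantorDigit_le ha y n
  · rfl

lemma norm_cantorFDigit_div_pow_le {q : ℕ} (ha : ∀ n, 0 < a n) (haq : ∀ n, a n ≤ q)
    (y : ℝ) (n : ℕ) : ‖cantorFDigit a y n / (q : ℝ) ^ (n + 1)‖ ≤ (q : ℝ)⁻¹ ^ n := by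
  have hq : (0 : ℝ) < q := by exact_mod_cast (ha 0).trans_le (haq 0)
  have hdig : cantorFDigit a y n ≤ q := by
    have : (a n : ℝ) ≤ q := by exact_mod_cast haq n
    linarith [cantorFDigit_le ha y n]
  rw [Real.norm_of_nonneg (div_nonneg (cantorFDigit_nonneg ha y n) (by positivity)), inv_pow,
    div_le_iff₀ (by positivity), pow_succ, ← mul_assoc, inv_mul_cancel₀ (by positivity), one_mul]
  exact hdig

lemma cantorFDigit_eventuallyEq {l : Filter ℝ} {x : ℝ} (hx : x < 1) (hl : l ≤ 𝓝 x)
    (hfloor : ∀ m, ∀ᶠ y in l, ⌊(cantorProd a m : ℝ) * y⌋ = ⌊(cantorProd a m : ℝ) * x⌋)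
    (n : ℕ) : ∀ᶠ y in l, cantorFDigit a y n = cantorFDigit a x n := by
  filter_upwards [hl (Iio_mem_nhds hx), hfloor n, hfloor (n + 1)] with y hy hn hn1
  simp only [cantorFDigit, if_pos hx, if_pos (Set.mem_Iio.1 hy), cantorDigit, hn, hn1]

lemma cantorFDigit_eventuallyEq_one (ha : ∀ n, 0 < a n) (n : ℕ) :
    ∀ᶠ y in 𝓝[<] (1 : ℝ), cantorFDigit a y n = cantorFDigit a 1 n := by
  filter_upwards [self_mem_nhdsWithin,
    Int.eventually_floor_natCast_mul_eq_left (cantorProd_pos ha n),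
    Int.eventually_floor_natCast_mul_eq_left (cantorProd_pos ha (n + 1))] with y hy hn hn1
  simp only [cantorFDigit, if_pos (Set.mem_Iio.1 hy), lt_irrefl, if_false]
  rw [cantorDigit, hn, hn1, cantorProd_succ]
  push_cast
  ring

lemma cantorFDigit_eventuallyEq_nhdsWithin_Icc (ha : ∀ n, 0 < a n) {x : ℝ}
    (hx : x ∈ Set.Icc (0 : ℝ) 1) (hxirr : ¬ QRational a x) (n : ℕ) :
    ∀ᶠ y in 𝓝[Set.Icc 0 1] x, cantorFDigit a y n = cantorFDigit a x n := by
  rcases hx.2.lt_or_eq with hx1 | rfl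
  · rcases hx.1.lt_or_eq with hx0 | rfl
    · exact cantorFDigit_eventuallyEq hx1 nhdsWithin_le_nhds (fun m => nhdsWithin_le_nhds <|
        Int.eventually_floor_mul_eq (cantorProd_mul_ne_intCast ha ⟨hx0, hx1⟩ hxirr m)) n
    · have hle : 𝓝[Set.Icc 0 1] (0 : ℝ) ≤ 𝓝[≥] 0 := nhdsWithin_mono _ Set.Icc_subset_Ici_self
      exact cantorFDigit_eventuallyEq hx1 nhdsWithin_le_nhds
        (fun m => hle <| Int.eventually_floor_mul_eq_right (Nat.cast_nonneg _) 0) n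
  · have hle : 𝓝[Set.Icc 0 1] (1 : ℝ) ≤ 𝓝[<] 1 ⊔ pure 1 := by
      rw [← nhdsWithin_singleton, ← nhdsWithin_union]
      exact nhdsWithin_mono _ fun y hy => (eq_or_lt_of_le hy.2).symm
    exact hle (eventually_sup.2 ⟨cantorFDigit_eventuallyEq_one ha n, eventually_pure.2 rfl⟩)

end CantorDigits

/-- `f` is continuous at every point of `[0,1]` that is not Q-rational. -/
theorem stmt3 (q : ℕ) (hq : 2 ≤ q) (a : ℕ → ℕ) (ha : ∀ n, 2 ≤ a n ∧ a n ≤ q)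
    (x : ℝ) (hx : x ∈ Set.Icc (0 : ℝ) 1) (hxirr : ¬ QRational a x) :
    ContinuousWithinAt (cantorF a q) (Set.Icc (0 : ℝ) 1) x := by
  have ha₀ : ∀ n, 0 < a n := fun n => two_pos.trans_le (ha n).1
  rw [ContinuousWithinAt, funext (cantorF_eq_tsum q)]
  refine tendsto_tsum_of_dominated_convergence
    (summable_geometric_of_lt_one (by positivity) (inv_lt_one_of_one_lt₀ (by exact_mod_cast hq)))
    (fun n => ?_) (Eventually.of_forall fun y n =>
      norm_cantorFDigit_div_pow_le ha₀ (fun n => (ha n).2) y n)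
  refine tendsto_const_nhds.congr' ?_
  exact (cantorFDigit_eventuallyEq_nhdsWithin_Icc ha₀ hx hxirr n).mono fun y hy => by simp only [hy]
end

section
/- If q_n ≤ q − 1 for infinitely many n, then lim_{n→∞} (q_1 q_2 ⋯ q_n) · Σ_{j=n+1}^∞ (q_j − 1)/q^j = 0. (The quantity (q_1⋯q_n)·Σ_{j>n}(q_j−1)/q^j is the ratio of the change of f on a rank-n cylinder of the Cantor series expansion to the length 1/(q_1⋯q_n) of that cylinder.) -/
open Filter Topology Finset

/-!
Each tail term is at most `(q - 1) / q ^ (j + 1)`, and these sum to `q⁻ⁿ`, so the quantity is at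
most `∏_{j<n} (q_j / q)`. Every factor is at most `1`, and each of the infinitely many indices
with `q_j ≤ q - 1` contributes a factor at most `(q - 1) / q < 1`.
-/

lemma Nat.tendsto_count_atTop {p : ℕ → Prop} [DecidablePred p] (hp : {n | p n}.Infinite) :
    Tendsto (Nat.count p) atTop atTop :=
  tendsto_atTop_atTop_of_monotone (Nat.count_monotone p) fun b =>
    ⟨Nat.nth p b, (Nat.count_nth_of_infinite hp b).ge⟩

lemma hasSum_sub_one_div_pow {q : ℝ} (hq : 1 < q) (n : ℕ) :
    HasSum (fun j : ℕ => (q - 1) / q ^ (n + j + 1)) (q ^ n)⁻¹ := by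
  have hq0 : 0 < q := by linarith
  have hq1 : q - 1 ≠ 0 := by linarith
  have hterm : (fun j : ℕ => (q - 1) / q ^ (n + j + 1)) =
      fun j => (q - 1) / q ^ (n + 1) * q⁻¹ ^ j := by
    funext j
    rw [inv_pow, add_right_comm, pow_add]
    field_simp
  have hvalue : (q ^ n)⁻¹ = (q - 1) / q ^ (n + 1) * (1 - q⁻¹)⁻¹ := by
    rw [inv_eq_one_div q, one_sub_div hq0.ne', pow_succ]
    field_simp
  rw [hterm, hvalue]
  exact (hasSum_geometric_of_lt_one (inv_nonneg.2 hq0.le) (inv_lt_one_of_one_lt₀ hq)).mul_left _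

lemma tsum_div_pow_le_inv_pow {q : ℝ} (hq : 1 < q) {c : ℕ → ℝ} (hc0 : ∀ j, 0 ≤ c j)
    (hcq : ∀ j, c j ≤ q - 1) (n : ℕ) :
    ∑' j : ℕ, c (n + j) / q ^ (n + j + 1) ≤ (q ^ n)⁻¹ := by
  have hgeom := hasSum_sub_one_div_pow hq n
  have hle : ∀ j, c (n + j) / q ^ (n + j + 1) ≤ (q - 1) / q ^ (n + j + 1) := fun j =>
    div_le_div_of_nonneg_right (hcq _) (by positivity)
  have hsum : Summable fun j => c (n + j) / q ^ (n + j + 1) :=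
    hgeom.summable.of_nonneg_of_le (fun j => div_nonneg (hc0 _) (by positivity)) hle
  exact (hsum.tsum_le_tsum hle hgeom.summable).trans_eq hgeom.tsum_eq

lemma prod_range_le_pow_count {f : ℕ → ℝ} {r : ℝ} {p : ℕ → Prop} [DecidablePred p]
    (hf0 : ∀ j, 0 ≤ f j) (hf1 : ∀ j, f j ≤ 1) (hfr : ∀ j, p j → f j ≤ r) (n : ℕ) :
    ∏ j ∈ range n, f j ≤ r ^ Nat.count p n := by
  induction n with
  | zero => simp
  | succ n ih =>
    rw [prod_range_succ, Nat.count_succ]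
    by_cases hpn : p n
    · rw [if_pos hpn, pow_succ]
      exact mul_le_mul ih (hfr n hpn) (hf0 n) (pow_nonneg ((hf0 n).trans (hfr n hpn)) _)
    · rw [if_neg hpn, add_zero]
      exact (mul_le_of_le_one_right (prod_nonneg fun j _ => hf0 j) (hf1 n)).trans ih

/-- 0-indexed: `a n` is the paper's `q_{n+1}`.
If `q_n ≤ q - 1` for infinitely many `n`, then
`(q_1⋯q_n) · ∑_{j>n} (q_j - 1)/q^j → 0` as `n → ∞`. -/
theorem stmt6 (q : ℕ) (hq : 2 ≤ q) (a : ℕ → ℕ) (ha : ∀ n, 2 ≤ a n ∧ a n ≤ q)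
    (hinf : {n : ℕ | a n ≤ q - 1}.Infinite) :
    Tendsto
      (fun n : ℕ => (∏ j ∈ Finset.range n, (a j : ℝ)) *
        ∑' j : ℕ, ((a (n + j) : ℝ) - 1) / (q : ℝ) ^ (n + j + 1))
      atTop (nhds 0) := by
  have hq1 : (1 : ℝ) < q := by exact_mod_cast hq
  have hq0 : (0 : ℝ) < q := one_pos.trans hq1
  have ha2 (j : ℕ) : (2 : ℝ) ≤ a j := by exact_mod_cast (ha j).1
  have haq (j : ℕ) : (a j : ℝ) ≤ q := by exact_mod_cast (ha j).2
  have hprod_nonneg (n : ℕ) : 0 ≤ ∏ j ∈ range n, (a j : ℝ) :=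
    prod_nonneg fun j _ => by linarith [ha2 j]
  have hsmall (j : ℕ) (hj : a j ≤ q - 1) : (a j : ℝ) ≤ q - 1 := by
    rw [← Nat.cast_one, ← Nat.cast_sub (by omega)]
    exact_mod_cast hj
  have hbound (n : ℕ) :
      (∏ j ∈ range n, (a j : ℝ)) * ∑' j : ℕ, ((a (n + j) : ℝ) - 1) / (q : ℝ) ^ (n + j + 1) ≤
        (((q : ℝ) - 1) / q) ^ Nat.count (fun j => a j ≤ q - 1) n :=
    calc _ ≤ (∏ j ∈ range n, (a j : ℝ)) * ((q : ℝ) ^ n)⁻¹ :=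
          mul_le_mul_of_nonneg_left (tsum_div_pow_le_inv_pow hq1 (c := fun j => (a j : ℝ) - 1)
            (fun j => by linarith [ha2 j]) (fun j => by linarith [haq j]) n) (hprod_nonneg n)
      _ = ∏ j ∈ range n, ((a j : ℝ) / q) := by
          rw [prod_div_distrib, prod_const, card_range, div_eq_mul_inv]
      _ ≤ _ := prod_range_le_pow_count (fun j => by positivity)
          (fun j => (div_le_one hq0).2 (haq j))
          (fun j hj => div_le_div_of_nonneg_right (hsmall j hj) hq0.le) n
  refine squeeze_zero (fun n => mul_nonneg (hprod_nonneg n) (tsum_nonneg fun j =>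
    div_nonneg (by linarith [ha2 (n + j)]) (by positivity))) hbound ?_
  exact (tendsto_pow_atTop_nhds_zero_of_lt_one (div_nonneg (by linarith) hq0.le)
    ((div_lt_one hq0).2 (by linarith))).comp (Nat.tendsto_count_atTop hinf)
end

section
/- The maps h and Φ are injective on Θ^{ℕ≥1}; consequently there is a unique well-defined bijection g : D → E satisfying g(h(α)) = Φ(α) for every α ∈ Θ^{ℕ≥1}. -/
open Filter Topology MeasureTheory

/-- `α` is a sequence with all terms in `Θ = {1,…,q-1} \ {u}`. -/
def ThetaSeq (q u : ℕ) (α : ℕ → ℕ) : Prop :=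
  ∀ n, 1 ≤ α n ∧ α n ≤ q - 1 ∧ α n ≠ u

/-- `S_{n+1}(α) = α_1 + ⋯ + α_{n+1}` (0-indexed: `α i` is the paper's `α_{i+1}`). -/
def Ssum (α : ℕ → ℕ) (n : ℕ) : ℕ := ∑ i ∈ Finset.range (n + 1), α i

/-- `h(α) = u/(q-1) + ∑_{n≥1} (α_n - u) q^{-S_n(α)}`. -/
noncomputable def hmap (q u : ℕ) (α : ℕ → ℕ) : ℝ :=
  (u : ℝ) / ((q : ℝ) - 1) +
    ∑' n : ℕ, ((α n : ℝ) - (u : ℝ)) / (q : ℝ) ^ (Ssum α n)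

/-- `Φ(α) = ∑_{n≥1} α_n q^{-n}`. -/
noncomputable def Phi (q : ℕ) (α : ℕ → ℕ) : ℝ :=
  ∑' n : ℕ, (α n : ℝ) / (q : ℝ) ^ (n + 1)

/-- `D = {h(α) : α ∈ Θ^{ℕ≥1}}`. -/
def Dset (q u : ℕ) : Set ℝ := {x | ∃ α, ThetaSeq q u α ∧ hmap q u α = x}

/-- `E = {Φ(α) : α ∈ Θ^{ℕ≥1}}`. -/
def Eset (q u : ℕ) : Set ℝ := {y | ∃ α, ThetaSeq q u α ∧ Phi q α = y}

/-! Φ(α) is the base-`q` expansion `0.α₁α₂…`, and since `u/(q-1) = 0.uuu…`, `h(α)` is the base-`q`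
expansion whose digit at place `S_n(α)` is `α_n` and whose every other digit is `u`. Both digit
sequences have infinitely many nonzero digits, and base-`q` expansions with this property are
unique. As `α_n ≠ u`, the places where the digit of `h(α)` differs from `u` are exactly the partial
sums `S_n(α)`, and these determine `α`. So `h` and `Φ` are injective on `Θ^ℕ`, and `g = Φ ∘ h⁻¹`. -/

open Set Function

theorem Set.InjOn.existsUnique_bijective_image {α β γ : Type*} {s : Set α} {f : α → β}
    {g : α → γ} (hf : InjOn f s) (hg : InjOn g s) :
    ∃! φ : f '' s → g '' s, Bijective φ ∧ ∀ a (ha : a ∈ s), (φ ⟨f a, a, ha, rfl⟩ : γ) = g a := by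
  let e := (Equiv.Set.imageOfInjOn f s hf).symm.trans (Equiv.Set.imageOfInjOn g s hg)
  have he a (ha : a ∈ s) : (e ⟨f a, a, ha, rfl⟩ : γ) = g a :=
    congrArg (Subtype.val ∘ Equiv.Set.imageOfInjOn g s hg)
      ((Equiv.Set.imageOfInjOn f s hf).symm_apply_apply ⟨a, ha⟩)
  refine ⟨e, ⟨e.bijective, he⟩, fun φ ⟨_, hφ⟩ ↦ funext ?_⟩
  rintro ⟨_, a, ha, rfl⟩
  exact Subtype.ext ((hφ a ha).trans (he a ha).symm)

namespace Real

variable {b : ℕ}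

theorem ofDigits_pos [NeZero b] {a : ℕ → Fin b} {i : ℕ} (hi : a i ≠ 0) : 0 < ofDigits a := by
  have hai : (0 : ℝ) < (a i : ℕ) := by
    exact_mod_cast Nat.pos_of_ne_zero (Fin.val_ne_zero_iff.mpr hi)
  have hterm : 0 < ofDigitsTerm a i := by
    have := NeZero.pos b
    unfold ofDigitsTerm
    positivity
  exact hterm.trans_le (summable_ofDigitsTerm.le_tsum i fun _ _ ↦ ofDigitsTerm_nonneg)

theorem ofDigits_lt_ofDigits_of_toLex_lt [NeZero b] {a a' : ℕ → Fin b}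
    (hlt : toLex a < toLex a') (ha' : ∃ᶠ i in atTop, a' i ≠ 0) : ofDigits a < ofDigits a' := by
  obtain ⟨n, hprefix, hn⟩ := hlt
  obtain ⟨k, hk, hk0⟩ := frequently_atTop.mp ha' (n + 1)
  set c : ℝ := ((b : ℝ) ^ (n + 1))⁻¹
  have hc : 0 < c := by
    have := NeZero.pos b
    positivity
  -- the first differing digit gains at least `c`, which bounds the tail of `a` but not the
  -- (positive) tail of `a'`
  have hsum : ∑ i ∈ Finset.range n, ofDigitsTerm a i = ∑ i ∈ Finset.range n, ofDigitsTerm a' i :=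
    Finset.sum_congr rfl fun i hi ↦ by
      simp only [ofDigitsTerm, show a i = a' i from hprefix i (Finset.mem_range.mp hi)]
  have hdigit : ofDigitsTerm a n + c ≤ ofDigitsTerm a' n := by
    have : ((a n : ℕ) : ℝ) + 1 ≤ (a' n : ℕ) := by exact_mod_cast Fin.lt_def.mp hn
    simp only [ofDigitsTerm]
    nlinarith
  have htail : 0 < c * ofDigits fun i ↦ a' (i + (n + 1)) :=
    mul_pos hc (ofDigits_pos (i := k - (n + 1)) (by rwa [Nat.sub_add_cancel hk]))
  have htail_le : c * ofDigits (fun i ↦ a (i + (n + 1))) ≤ c :=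
    mul_le_of_le_one_right hc.le (ofDigits_le_one _)
  rw [ofDigits_eq_sum_add_ofDigits a (n + 1), ofDigits_eq_sum_add_ofDigits a' (n + 1),
    Finset.sum_range_succ, Finset.sum_range_succ, hsum]
  linarith

theorem ofDigits_injOn [NeZero b] : InjOn ofDigits {a : ℕ → Fin b | ∃ᶠ i in atTop, a i ≠ 0} := by
  intro a ha a' ha' h
  rcases lt_trichotomy (toLex a) (toLex a') with hlt | heq | hgt
  · exact absurd h (ofDigits_lt_ofDigits_of_toLex_lt hlt ha').ne
  · exact heq
  · exact absurd h (ofDigits_lt_ofDigits_of_toLex_lt hgt ha).ne'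

end Real

section Phi

variable {q : ℕ} {d : ℕ → ℕ}

theorem Phi_eq_ofDigits (hd : ∀ n, d n < q) :
    Phi q d = Real.ofDigits fun n ↦ (⟨d n, hd n⟩ : Fin q) := by
  simp [Phi, Real.ofDigits, Real.ofDigitsTerm, div_eq_mul_inv]

theorem summable_Phi (hd : ∀ n, d n < q) : Summable fun n ↦ (d n : ℝ) / (q : ℝ) ^ (n + 1) :=
  (Real.summable_ofDigitsTerm (digits := fun n ↦ (⟨d n, hd n⟩ : Fin q))).congr fun n ↦ by
    simp [Real.ofDigitsTerm, div_eq_mul_inv]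

theorem Phi_const (hq : 1 < q) (c : ℕ) : Phi q (fun _ ↦ c) = c / ((q : ℝ) - 1) := by
  have hq' : (1 : ℝ) < q := by exact_mod_cast hq
  have hr : (q : ℝ)⁻¹ < 1 := inv_lt_one_of_one_lt₀ hq'
  have hterm : ∀ n, (c : ℝ) / (q : ℝ) ^ (n + 1) = c / q * (q : ℝ)⁻¹ ^ n := fun n ↦ by
    rw [pow_succ, inv_pow]
    field_simp
  rw [Phi, tsum_congr hterm, tsum_mul_left, tsum_geometric_of_lt_one (by positivity) hr]
  have : (q : ℝ) - 1 ≠ 0 := by linarith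
  field_simp

theorem Phi_injOn : InjOn (Phi q) {d | (∀ n, d n < q) ∧ ∃ᶠ n in atTop, d n ≠ 0} := by
  rintro d ⟨hd, hd0⟩ e ⟨he, he0⟩ h
  have : NeZero q := NeZero.of_pos ((Nat.zero_le _).trans_lt (hd 0))
  rw [Phi_eq_ofDigits hd, Phi_eq_ofDigits he] at h
  have hfin := Real.ofDigits_injOn (hd0.mono fun n hn ↦ by simpa [Fin.ext_iff] using hn)
    (he0.mono fun n hn ↦ by simpa [Fin.ext_iff] using hn) h
  funext n
  exact congrArg Fin.val (congrFun hfin n)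

end Phi

section hmap

variable {q u : ℕ} {α : ℕ → ℕ}

theorem lt_Ssum (hα : ∀ n, 1 ≤ α n) (n : ℕ) : n < Ssum α n := by
  simpa [Ssum] using Finset.card_nsmul_le_sum (Finset.range (n + 1)) α 1 fun i _ ↦ hα i

theorem Ssum_strictMono (hα : ∀ n, 1 ≤ α n) : StrictMono (Ssum α) :=
  strictMono_nat_of_lt_succ fun n ↦ by
    rw [Ssum, Ssum, Finset.sum_range_succ _ (n + 1)]
    have := hα (n + 1)
    omega

/-- The base-`q` digits of `h(α)`: the digit of `q^{-k}`, stored at index `k - 1`, is `α_n` if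
`k = S_n(α)` and `u` otherwise. -/
noncomputable def hDigits (u : ℕ) (α : ℕ → ℕ) (j : ℕ) : ℕ :=
  open Classical in
  if j + 1 ∈ range (Ssum α) then α (invFun (Ssum α) (j + 1)) else u

theorem hDigits_Ssum_sub_one (hα : ∀ n, 1 ≤ α n) (n : ℕ) :
    hDigits u α (Ssum α n - 1) = α n := by
  rw [hDigits, Nat.sub_add_cancel (by have := lt_Ssum hα n; omega), if_pos (mem_range_self n),
    leftInverse_invFun (Ssum_strictMono hα).injective n]

theorem hDigits_of_not_mem {j : ℕ} (hj : j + 1 ∉ range (Ssum α)) : hDigits u α j = u := by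
  rw [hDigits, if_neg hj]

theorem hDigits_lt (hu : u < q) (hα : ∀ n, α n < q) (j : ℕ) : hDigits u α j < q := by
  rw [hDigits]
  split_ifs
  exacts [hα _, hu]

theorem frequently_hDigits_ne_zero (hα : ∀ n, 1 ≤ α n) : ∃ᶠ j in atTop, hDigits u α j ≠ 0 :=
  frequently_atTop.mpr fun N ↦ ⟨Ssum α N - 1, by have := lt_Ssum hα N; omega, by
    rw [hDigits_Ssum_sub_one hα]; exact Nat.one_le_iff_ne_zero.mp (hα N)⟩

theorem mem_range_Ssum_iff (hα : ∀ n, 1 ≤ α n ∧ α n ≠ u) {k : ℕ} :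
    k ∈ range (Ssum α) ↔ 0 < k ∧ hDigits u α (k - 1) ≠ u := by
  have hpos n := (hα n).1
  constructor
  · rintro ⟨n, rfl⟩
    refine ⟨(Nat.zero_le n).trans_lt (lt_Ssum hpos n), ?_⟩
    rw [hDigits_Ssum_sub_one hpos]
    exact (hα n).2
  · rintro ⟨hk, hne⟩
    by_contra hk'
    exact hne (hDigits_of_not_mem (by rwa [Nat.sub_add_cancel hk]))

theorem hDigits_injOn : InjOn (hDigits u) {α | ∀ n, 1 ≤ α n ∧ α n ≠ u} := by
  intro α hα β hβ h
  have hS : Ssum α = Ssum β := by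
    refine ((Ssum_strictMono fun n ↦ (hα n).1).range_inj (Ssum_strictMono fun n ↦ (hβ n).1)).mp ?_
    ext k
    rw [mem_range_Ssum_iff hα, mem_range_Ssum_iff hβ, h]
  funext n
  calc α n = hDigits u α (Ssum α n - 1) := (hDigits_Ssum_sub_one (fun n ↦ (hα n).1) n).symm
    _ = β n := by rw [h, hS, hDigits_Ssum_sub_one fun n ↦ (hβ n).1]

theorem tsum_hDigits_sub (hα : ∀ n, 1 ≤ α n) :
    ∑' j, ((hDigits u α j : ℝ) - u) / (q : ℝ) ^ (j + 1) =
      ∑' n, ((α n : ℝ) - u) / (q : ℝ) ^ Ssum α n := by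
  have hinj : Injective fun n ↦ Ssum α n - 1 := fun m n (hmn : Ssum α m - 1 = Ssum α n - 1) ↦
    (Ssum_strictMono hα).injective (by have := lt_Ssum hα m; have := lt_Ssum hα n; omega)
  rw [← hinj.tsum_eq]
  · refine tsum_congr fun n ↦ ?_
    rw [hDigits_Ssum_sub_one hα, Nat.sub_add_cancel (by have := lt_Ssum hα n; omega)]
  · intro j hj
    by_contra hjr
    apply hj
    beta_reduce
    rw [hDigits_of_not_mem fun ⟨n, hn⟩ ↦ hjr ⟨n, show Ssum α n - 1 = j by omega⟩, sub_self,
      zero_div]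

theorem hmap_eq_Phi_hDigits (hq : 1 < q) (hu : u < q) (hα : ∀ n, 1 ≤ α n ∧ α n < q) :
    hmap q u α = Phi q (hDigits u α) := by
  have hsub : ∑' j, ((hDigits u α j : ℝ) - u) / (q : ℝ) ^ (j + 1) =
      Phi q (hDigits u α) - Phi q fun _ ↦ u := by
    rw [Phi, Phi, ← (summable_Phi (hDigits_lt hu fun n ↦ (hα n).2)).tsum_sub
      (summable_Phi fun _ ↦ hu)]
    simp_rw [sub_div]
  rw [hmap, ← Phi_const hq, ← tsum_hDigits_sub fun n ↦ (hα n).1, hsub]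
  ring

end hmap

theorem ThetaSeq.lt {q u : ℕ} {α : ℕ → ℕ} (hα : ThetaSeq q u α) (n : ℕ) : α n < q := by
  have := hα n
  omega

theorem hmap_injOn {q u : ℕ} (hq : 1 < q) (hu : u < q) : InjOn (hmap q u) {α | ThetaSeq q u α} := by
  intro α hα β hβ h
  have hDigits_mem {γ} (hγ : ThetaSeq q u γ) :
      hDigits u γ ∈ {d | (∀ n, d n < q) ∧ ∃ᶠ n in atTop, d n ≠ 0} :=
    ⟨hDigits_lt hu hγ.lt, frequently_hDigits_ne_zero fun n ↦ (hγ n).1⟩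
  refine hDigits_injOn (fun n ↦ ⟨(hα n).1, (hα n).2.2⟩) (fun n ↦ ⟨(hβ n).1, (hβ n).2.2⟩)
    (Phi_injOn (hDigits_mem hα) (hDigits_mem hβ) ?_)
  rwa [← hmap_eq_Phi_hDigits hq hu fun n ↦ ⟨(hα n).1, hα.lt n⟩,
    ← hmap_eq_Phi_hDigits hq hu fun n ↦ ⟨(hβ n).1, hβ.lt n⟩]

theorem Phi_injOn_ThetaSeq {q u : ℕ} : InjOn (Phi q) {α | ThetaSeq q u α} := by
  refine Phi_injOn.mono fun α (hα : ThetaSeq q u α) ↦ ?_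
  exact ⟨hα.lt, Frequently.of_forall fun n ↦ Nat.one_le_iff_ne_zero.mp (hα n).1⟩

/-- `h` and `Φ` are injective on `Θ^{ℕ≥1}`; consequently there is a
unique bijection `g : D → E` with `g(h(α)) = Φ(α)` for all `α ∈ Θ^{ℕ≥1}`. -/
theorem stmt9 (q : ℕ) (hq : 4 ≤ q) (u : ℕ) (hu : u ≤ q - 1) :
    (∀ α β, ThetaSeq q u α → ThetaSeq q u β → hmap q u α = hmap q u β → α = β) ∧
    (∀ α β, ThetaSeq q u α → ThetaSeq q u β → Phi q α = Phi q β → α = β) ∧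
    (∃! g : Dset q u → Eset q u, Function.Bijective g ∧
      ∀ α (hα : ThetaSeq q u α),
        ((g ⟨hmap q u α, α, hα, rfl⟩ : Eset q u) : ℝ) = Phi q α) := by
  have hh : InjOn (hmap q u) {α | ThetaSeq q u α} := hmap_injOn (by omega) (by omega)
  have hΦ : InjOn (Phi q) {α | ThetaSeq q u α} := Phi_injOn_ThetaSeq
  exact ⟨fun α β hα hβ ↦ hh hα hβ, fun α β hα hβ ↦ hΦ hα hβ, hh.existsUnique_bijective_image hΦ⟩
end

section
/- The function g : D → ℝ is continuous on D (continuous at every point of D with respect to the subspace topology of D ⊆ ℝ). -/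
open Filter Topology MeasureTheory

/-! The parameter set `{α | ThetaSeq q u α}` is a product of finite sets, hence compact in the
product topology on `ℕ → ℕ`, and both `h` and `Φ` are continuous on it by the Weierstrass M-test.
A continuous map from a compact space onto a Hausdorff space is closed, hence a quotient map, so a
function `g` on `D = h(Θ^ℕ)` is continuous as soon as `g ∘ h = Φ` is. -/

theorem IsCompact.continuousOn_image_of_comp {X Y Z : Type*} [TopologicalSpace X]
    [TopologicalSpace Y] [T2Space Y] [TopologicalSpace Z] {K : Set X} (hK : IsCompact K)
    {f : X → Y} {g : Y → Z} (hf : ContinuousOn f K) (hgf : ContinuousOn (g ∘ f) K) :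
    ContinuousOn g (f '' K) := by
  have : CompactSpace K := isCompact_iff_compactSpace.mp hK
  have hmaps : Set.MapsTo f K (f '' K) := Set.mapsTo_image f K
  have hcont : Continuous hmaps.restrict := hf.mapsToRestrict hmaps
  have hquot : IsQuotientMap hmaps.restrict :=
    hcont.isClosedMap.isQuotientMap hcont
      (hmaps.restrict_surjective_iff.mpr (Set.surjOn_image f K))
  rw [continuousOn_iff_continuous_domRestrict, hquot.continuous_iff]
  exact continuousOn_iff_continuous_domRestrict.mp hgf

lemma norm_div_natCast_pow_le {q m n : ℕ} (hq : 2 ≤ q) (hnm : n ≤ m) {a C : ℝ}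
    (ha : |a| ≤ C) : ‖a / (q : ℝ) ^ m‖ ≤ C * (1 / 2) ^ n := by
  have hpow : (2 : ℝ) ^ n ≤ (q : ℝ) ^ m :=
    calc (2 : ℝ) ^ n ≤ 2 ^ m := pow_le_pow_right₀ one_le_two hnm
      _ ≤ (q : ℝ) ^ m := pow_le_pow_left₀ zero_le_two (by exact_mod_cast hq) m
  rw [norm_div, Real.norm_eq_abs, norm_pow, Real.norm_natCast, one_div, inv_pow, ← div_eq_mul_inv]
  exact div_le_div₀ ((abs_nonneg a).trans ha) ha (by positivity) hpow

lemma ThetaSeq.two_le {q u : ℕ} {α : ℕ → ℕ} (hα : ThetaSeq q u α) : 2 ≤ q := by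
  have := hα 0
  omega

lemma ThetaSeq.cast_le {q u : ℕ} {α : ℕ → ℕ} (hα : ThetaSeq q u α) (n : ℕ) :
    (α n : ℝ) ≤ q :=
  Nat.cast_le.mpr ((hα n).2.1.trans (Nat.sub_le q 1))

lemma add_one_le_Ssum {α : ℕ → ℕ} (hα : ∀ i, 1 ≤ α i) (n : ℕ) : n + 1 ≤ Ssum α n := by
  simpa [Ssum] using Finset.sum_le_sum fun i (_ : i ∈ Finset.range (n + 1)) => hα i

lemma continuous_Ssum (n : ℕ) : Continuous fun α : ℕ → ℕ => Ssum α n :=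
  continuous_finsetSum _ fun i _ => continuous_apply i

lemma isCompact_setOf_thetaSeq (q u : ℕ) : IsCompact {α : ℕ → ℕ | ThetaSeq q u α} := by
  have hpi : {α : ℕ → ℕ | ThetaSeq q u α}
      = Set.univ.pi fun _ => {a : ℕ | 1 ≤ a ∧ a ≤ q - 1 ∧ a ≠ u} := by
    ext α
    simp [ThetaSeq, Set.mem_pi]
  rw [hpi]
  exact isCompact_univ_pi fun _ =>
    ((Set.finite_Iic (q - 1)).subset fun _ ha => Set.mem_Iic.mpr ha.2.1).isCompact

lemma continuousOn_hmap (q u : ℕ) : ContinuousOn (hmap q u) {α | ThetaSeq q u α} := by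
  refine continuousOn_const.add (continuousOn_tsum (u := fun n => ((q : ℝ) + u) * (1 / 2) ^ n)
    (fun n => Continuous.continuousOn ?_) (summable_geometric_two.mul_left _) ?_)
  · exact (continuous_of_discreteTopology
      (f := fun p : ℕ × ℕ => ((p.1 : ℝ) - u) / (q : ℝ) ^ p.2)).comp
      ((continuous_apply n).prodMk (continuous_Ssum n))
  · intro n α hα
    have hnum : |(α n : ℝ) - u| ≤ q + u :=
      calc |(α n : ℝ) - u| ≤ |(α n : ℝ)| + |(u : ℝ)| := abs_sub _ _
        _ ≤ q + u := by rw [Nat.abs_cast, Nat.abs_cast]; linarith [hα.cast_le n]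
    exact norm_div_natCast_pow_le hα.two_le
      ((Nat.le_succ n).trans (add_one_le_Ssum (fun i => (hα i).1) n)) hnum

lemma continuousOn_Phi (q u : ℕ) : ContinuousOn (Phi q) {α | ThetaSeq q u α} := by
  refine continuousOn_tsum (u := fun n => (q : ℝ) * (1 / 2) ^ n)
    (fun n => Continuous.continuousOn ?_) (summable_geometric_two.mul_left _) ?_
  · exact (continuous_of_discreteTopology (f := fun a : ℕ => (a : ℝ) / (q : ℝ) ^ (n + 1))).comp
      (continuous_apply n)
  · intro n α hα
    exact norm_div_natCast_pow_le hα.two_le (Nat.le_succ n)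
      (by rw [Nat.abs_cast]; exact hα.cast_le n)

theorem stmt16_general (q : ℕ) (u : ℕ)
    (g : ℝ → ℝ) (hg : ∀ α, ThetaSeq q u α → g (hmap q u α) = Phi q α) :
    ContinuousOn g (Dset q u) :=
  (isCompact_setOf_thetaSeq q u).continuousOn_image_of_comp (continuousOn_hmap q u)
    ((continuousOn_Phi q u).congr fun α hα => hg α hα)

/-- the function `g : D → ℝ` (any function on `ℝ` satisfying
`g(h(α)) = Φ(α)` for all `α ∈ Θ^{ℕ≥1}`) is continuous on `D` with respect to the
subspace topology of `D ⊆ ℝ`. -/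
theorem stmt16 (q : ℕ) (hq : 4 ≤ q) (u : ℕ) (hu : u ≤ q - 1)
    (g : ℝ → ℝ) (hg : ∀ α, ThetaSeq q u α → g (hmap q u α) = Phi q α) :
    ContinuousOn g (Dset q u) :=
  stmt16_general q u g hg
end
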